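/- Let G be a banana path containing a string of consecutive vertices v_k, ..., v_{k+ℓ} such that the edge bunch sizes between consecutive vertices of the string follow the repeating pattern a_1, ..., a_s, and set L = lcm(a_1, ..., a_s). If ℓ + 1 ≥ s·L² and D is a positive-rank divisor on G, then some effective divisor linearly equivalent to D places at least L chips in total on the vertices v_k, ..., v_{k+ℓ}. -/

import Mathlib

open Finset

attribute [local instance] Classical.propDecidable

noncomputable section

/-- A finite loopless multigraph on vertex type `V`, given by a symmetric
edge-multiplicity function: `mul u v` is the number of edges joining `u` and `v`. -/
structure Multigraph (V : Type) [Fintype V] where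
  mul : V → V → ℕ
  symm : ∀ u v, mul u v = mul v u
  loopless : ∀ v, mul v v = 0

namespace Multigraph

variable {V : Type} [Fintype V]

/-- The underlying simple graph of a multigraph. -/
def underlying (G : Multigraph V) : SimpleGraph V where
  Adj u v := 0 < G.mul u v
  symm := by
    refine ⟨fun u v h => ?_⟩
    rwa [G.symm] at h
  loopless := by
    refine ⟨fun v h => ?_⟩
    simp [G.loopless] at h

/-- A multigraph is connected if its underlying simple graph is. -/
def Connected (G : Multigraph V) : Prop := G.underlying.Connected

/-- A banana tree is a multigraph whose underlying simple graph is a tree. -/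
def IsBananaTree (G : Multigraph V) : Prop := G.underlying.IsTree

/-- The valence (degree) of a vertex. -/
def valence (G : Multigraph V) (v : V) : ℕ := ∑ w, G.mul v w

/-- The number of edges of a multigraph. -/
def edgeCount (G : Multigraph V) : ℕ := (∑ u, ∑ v, G.mul u v) / 2

/-- The genus (first Betti number) `|E| - |V| + 1` of a connected multigraph. -/
def genus (G : Multigraph V) : ℕ := G.edgeCount + 1 - Fintype.card V

/-- The degree of a divisor: the total number of chips. -/
def degree (D : V → ℤ) : ℤ := ∑ v, D v

/-- A divisor is effective if it is nonnegative everywhere. -/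
def Effective (D : V → ℤ) : Prop := ∀ v, 0 ≤ D v

/-- Linear equivalence of divisors: `D'` is obtained from `D` by a finite sequence of
chip-firing moves, equivalently (for connected graphs) via an integral firing script `σ`. -/
def LinEquiv (G : Multigraph V) (D D' : V → ℤ) : Prop :=
  ∃ σ : V → ℤ, ∀ v, D' v = D v + ∑ w, (G.mul v w : ℤ) * (σ w - σ v)

/-- A divisor has positive rank if for every vertex `v` it is linearly equivalent to an
effective divisor placing at least one chip on `v`. -/
def PosRank (G : Multigraph V) (D : V → ℤ) : Prop :=
  ∀ v, ∃ D', G.LinEquiv D D' ∧ Effective D' ∧ 1 ≤ D' v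

/-- The (divisorial) gonality: the minimum degree of a positive-rank effective divisor. -/
def gonality (G : Multigraph V) : ℕ :=
  sInf {d : ℕ | ∃ D : V → ℤ, Effective D ∧ G.PosRank D ∧ degree D = (d : ℤ)}

/-- `f(G, v, k)`: the minimum degree of an effective divisor `D` on `G` such that
`D + k·v` has positive rank. -/
def fmin (G : Multigraph V) (v : V) (k : ℕ) : ℕ :=
  sInf {d : ℕ | ∃ D : V → ℤ, Effective D ∧
    G.PosRank (fun u => D u + if u = v then (k : ℤ) else 0) ∧ degree D = (d : ℤ)}

/-- Delete a vertex from a multigraph. -/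
def deleteVertex (G : Multigraph V) (v : V) : Multigraph {u : V // u ≠ v} where
  mul a b := G.mul a.1 b.1
  symm := fun a b => G.symm a.1 b.1
  loopless := fun a => G.loopless a.1

/-- Delete one single edge between `u` and `w` (if any) from a multigraph. -/
def deleteOneEdge (G : Multigraph V) (u w : V) : Multigraph V where
  mul x y := if (x = u ∧ y = w) ∨ (x = w ∧ y = u) then G.mul x y - 1 else G.mul x y
  symm := by
    intro x y
    by_cases h : (x = u ∧ y = w) ∨ (x = w ∧ y = u)
    · have h' : (y = u ∧ x = w) ∨ (y = w ∧ x = u) := by tauto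
      simp [h, h', G.symm x y]
    · have h' : ¬((y = u ∧ x = w) ∨ (y = w ∧ x = u)) := by tauto
      simp [h, h', G.symm x y]
  loopless := by
    intro v
    by_cases h : (v = u ∧ v = w) ∨ (v = w ∧ v = u)
    · simp [h, G.loopless]
    · simp [h, G.loopless]

/-- The adjacency move from `v` to `w` on a banana tree: the subset-firing move at the
connected component of `v` after removing the `v`-`w` edge bunch.  Its net effect is to
move `|E(v,w)|` chips from `v` to `w`. -/
def adjMove (G : Multigraph V) (v w : V) (D : V → ℤ) : V → ℤ :=
  fun u => if u = v then D u - (G.mul v w : ℤ)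
    else if u = w then D u + (G.mul v w : ℤ) else D u

/-- A single legal adjacency move: both divisors are effective and the second is
obtained from the first by an adjacency move between adjacent vertices. -/
def LegalAdjStep (G : Multigraph V) (D D' : V → ℤ) : Prop :=
  ∃ v w, G.underlying.Adj v w ∧ Effective D ∧ Effective D' ∧ D' = G.adjMove v w D

/-- A scramble: a collection of nonempty vertex sets (eggs), each inducing a connected
subgraph. -/
def IsScramble (G : Multigraph V) (S : Finset (Finset V)) : Prop :=
  ∀ X ∈ S, X.Nonempty ∧ (G.underlying.induce (X : Set V)).Connected

/-- A hitting set of a scramble: a set of vertices meeting every egg. -/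
def IsHittingSet (S : Finset (Finset V)) (T : Finset V) : Prop :=
  ∀ X ∈ S, (X ∩ T).Nonempty

/-- The hitting number of a scramble. -/
def hittingNumber (S : Finset (Finset V)) : ℕ∞ :=
  sInf {t : ℕ∞ | ∃ T : Finset V, IsHittingSet S T ∧ (T.card : ℕ∞) = t}

/-- The simple graph remaining after removing `c u w` of the edges of each bunch. -/
def cutGraph (G : Multigraph V) (c : V → V → ℕ) : SimpleGraph V where
  Adj u w := u ≠ w ∧ c u w < G.mul u w ∧ c w u < G.mul w u
  symm := ⟨fun u w h => ⟨h.1.symm, h.2.2, h.2.1⟩⟩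
  loopless := ⟨fun u h => h.1 rfl⟩

/-- `c` describes an egg-cut of the scramble `S`: a set of edges of `G` (given by the
number `c u w` of edges removed from each bunch) whose removal leaves at least two
connected components each completely containing an egg. -/
def IsEggCut (G : Multigraph V) (S : Finset (Finset V)) (c : V → V → ℕ) : Prop :=
  (∀ u w, c u w = c w u) ∧ (∀ u w, c u w ≤ G.mul u w) ∧
  ∃ X₁ ∈ S, ∃ X₂ ∈ S,
    (∀ x ∈ X₁, ∀ y ∈ X₁, (G.cutGraph c).Reachable x y) ∧
    (∀ x ∈ X₂, ∀ y ∈ X₂, (G.cutGraph c).Reachable x y) ∧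
    (∀ x ∈ X₁, ∀ y ∈ X₂, ¬ (G.cutGraph c).Reachable x y)

/-- The egg-cut number of a scramble (`⊤` if no egg-cut exists). -/
def eggCutNumber (G : Multigraph V) (S : Finset (Finset V)) : ℕ∞ :=
  sInf {t : ℕ∞ | ∃ c : V → V → ℕ, G.IsEggCut S c ∧
    ((∑ u, ∑ w, c u w : ℕ) : ℕ∞) = 2 * t}

/-- The order of a scramble: the minimum of its hitting number and egg-cut number. -/
def scrambleOrder (G : Multigraph V) (S : Finset (Finset V)) : ℕ∞ :=
  min (hittingNumber S) (G.eggCutNumber S)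

/-- The scramble number of a multigraph: the maximum order of a scramble on it. -/
def scrambleNumber (G : Multigraph V) : ℕ∞ :=
  sSup {m : ℕ∞ | ∃ S : Finset (Finset V), G.IsScramble S ∧ G.scrambleOrder S = m}

/-- The weight of a node `t` in a tree-cut decomposition `(T, X)`: the number of vertices
mapped to `t` plus the number of edges routed through `t` with neither endpoint mapped
to `t`. -/
def nodeWeight (G : Multigraph V) {N : Type} [Fintype N] (T : SimpleGraph N)
    (X : V → N) (t : N) : ℕ :=
  (Finset.univ.filter fun v => X v = t).card +
    (∑ u, ∑ w, if X u ≠ t ∧ X w ≠ t ∧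
        ¬ (T.deleteEdges {e | t ∈ e}).Reachable (X u) (X w)
      then G.mul u w else 0) / 2

/-- The weight of a link `pq` in a tree-cut decomposition `(T, X)`: the number of edges
of `G` routed through that link. -/
def linkWeight (G : Multigraph V) {N : Type} (T : SimpleGraph N)
    (X : V → N) (p q : N) : ℕ :=
  (∑ u, ∑ w, if ¬ (T.deleteEdges {s(p, q)}).Reachable (X u) (X w)
    then G.mul u w else 0) / 2

/-- The width of a tree-cut decomposition `(T, X)`: the maximum of all node and link
weights. -/
def tcdWidth (G : Multigraph V) {N : Type} [Fintype N] (T : SimpleGraph N)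
    (X : V → N) : ℕ :=
  max (Finset.univ.sup fun t => G.nodeWeight T X t)
      (Finset.univ.sup fun p : N × N =>
        if T.Adj p.1 p.2 then G.linkWeight T X p.1 p.2 else 0)

/-- The screewidth of a multigraph: the minimum width of a tree-cut decomposition. -/
def screewidth (G : Multigraph V) : ℕ :=
  sInf {w : ℕ | ∃ (m : ℕ) (T : SimpleGraph (Fin m)), T.IsTree ∧
    ∃ X : V → Fin m, G.tcdWidth T X = w}

/-- The banana path on `n+1` vertices `v_0, …, v_n`, with `a i` edges joining
`v_i` and `v_{i+1}` (for `0 ≤ i < n`). -/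
def bananaPath (n : ℕ) (a : ℕ → ℕ) : Multigraph (Fin (n + 1)) where
  mul i j := if i.val + 1 = j.val then a i.val else if j.val + 1 = i.val then a j.val else 0
  symm := by
    intro u v
    split_ifs <;> first | rfl | (exfalso; omega)
  loopless := by
    intro v
    have h : ¬ (v.val + 1 = v.val) := by omega
    simp [h]

/-- The banana star with central vertex `Sum.inl ()` and, for each `i : Fin k`,
`r i` leaves joined to the center by `a i` parallel edges. -/
def bananaStar (k : ℕ) (a r : Fin k → ℕ) :
    Multigraph (Unit ⊕ (Σ i : Fin k, Fin (r i))) where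
  mul x y :=
    match x, y with
    | Sum.inl _, Sum.inr ⟨i, _⟩ => a i
    | Sum.inr ⟨i, _⟩, Sum.inl _ => a i
    | _, _ => 0
  symm := by
    intro u v
    rcases u with u | ⟨i, li⟩ <;> rcases v with v | ⟨j, lj⟩ <;> rfl
  loopless := by
    intro v
    rcases v with v | ⟨i, li⟩ <;> rfl

end Multigraph

/-!
A divisor `E` on a banana path is determined by its prefix sums
`T j = E(v_0) + ⋯ + E(v_{j-1})`. Firing only moves chips across edge bunches, so the effective
divisors equivalent to `D` correspond to the monotone sequences `T` with `T 0 = 0`,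
`T (n + 1) = deg D` and `T j` congruent to the prefix sum of `D` modulo the size of the bunch
between `v_{j-1}` and `v_j`. These conditions are pointwise, so such sequences are closed under
pointwise min and max and under splicing two of them together.

Positive rank gives, for each vertex `v_m`, such a sequence jumping at `m`; their pointwise min `u`
and max `U` satisfy `u m < U (m + 1)` for all `m`. Following `u` up to `v_k` and `U` afterwards
puts `U (k + ℓ + 1) - u k` chips on the string. If that were less than `L`, the monotone sequence
`u i + U (i + 1)` would grow by at most `2L - 3` along the string, so, as `(2L - 2) s ≤ ℓ`, it would
be constant over some `s` consecutive bunches. There `U - u` is a positive constant divisible by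
every `a_t`, hence by `L`, which is impossible.
-/

theorem Monotone.exists_add_eq_of_le_add {g : ℕ → ℤ} (hg : Monotone g) {R s ℓ : ℕ}
    (hℓ : (R + 1) * s ≤ ℓ) (hR : g ℓ ≤ g 0 + R) : ∃ j, j + s ≤ ℓ ∧ g (j + s) = g j := by
  by_contra! hne
  have hgrow : ∀ c ≤ R + 1, g 0 + c ≤ g (c * s) := by
    intro c
    induction c with
    | zero => simp
    | succ c ih =>
      intro hc
      have hcs : c * s + s ≤ ℓ := by
        rw [← Nat.succ_mul]; exact (Nat.mul_le_mul_right s hc).trans hℓ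
      have hlt : g (c * s) < g (c * s + s) :=
        lt_of_le_of_ne (hg (Nat.le_add_right _ _)) (hne _ hcs).symm
      rw [Nat.succ_mul]; push_cast; linarith [ih (by omega)]
  have hlast := hgrow (R + 1) le_rfl
  push_cast at hlast
  linarith [hg hℓ]

theorem lcm_le_sub_of_interlacing {u U : ℕ → ℤ} (hu : Monotone u) (hU : Monotone U)
    {a : ℕ → ℕ} {s ℓ : ℕ} (hjump : ∀ i ≤ ℓ, u i < U (i + 1))
    (hdvd : ∀ i < ℓ, (a (i % s) : ℤ) ∣ U (i + 1) - u (i + 1))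
    (hlen : s * (Finset.range s).lcm a ^ 2 ≤ ℓ + 1) :
    (((Finset.range s).lcm a : ℕ) : ℤ) ≤ U (ℓ + 1) - u 0 := by
  generalize hLdef : (Finset.range s).lcm a = L at *
  by_contra! hlt
  have hL : 2 ≤ L := by
    have : U 1 ≤ U (ℓ + 1) := hU (by omega)
    have : u 0 < U 1 := hjump 0 (Nat.zero_le ℓ)
    omega
  have hs : 0 < s := Nat.pos_of_ne_zero fun hs => by simp [← hLdef, hs] at hL
  have hwin : (2 * L - 3 + 1) * s ≤ ℓ := by
    obtain ⟨m, hm⟩ : ∃ m, L = m + 2 := ⟨L - 2, by omega⟩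
    rw [hm] at hlen ⊢
    rw [show 2 * (m + 2) - 3 + 1 = 2 * m + 2 by omega]
    nlinarith
  have hgm : Monotone fun i => u i + U (i + 1) := fun _ _ hij =>
    add_le_add (hu hij) (hU (by omega))
  have hrange : u ℓ + U (ℓ + 1) ≤ u 0 + U (0 + 1) + (2 * L - 3 : ℕ) := by
    have := hjump ℓ le_rfl
    have := hjump 0 (Nat.zero_le ℓ)
    have := hu (Nat.zero_le ℓ)
    omega
  obtain ⟨j, hjs, hflat⟩ := hgm.exists_add_eq_of_le_add hwin hrange
  have hu_const : ∀ i, j ≤ i → i ≤ j + s → u i = u j := by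
    intro i h₁ h₂
    linarith [hu h₁, hu h₂, hU (show j + 1 ≤ j + s + 1 by omega)]
  have hU_const : ∀ i, j + 1 ≤ i → i ≤ j + s + 1 → U i = U (j + 1) := by
    intro i h₁ h₂
    linarith [hU h₁, hU h₂, hu (show j ≤ j + s by omega)]
  have hgap : ∀ t < s, (a t : ℤ) ∣ U (j + 1) - u j := by
    intro t ht
    obtain ⟨i, hi, rfl⟩ := Finset.mem_image.1 (Nat.image_Ico_mod j s ▸ Finset.mem_range.2 ht)
    rw [Finset.mem_Ico] at hi
    rw [← hU_const (i + 1) (by omega) (by omega), ← hu_const (i + 1) (by omega) (by omega)]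
    exact hdvd i (by omega)
  have hLdvd : (L : ℤ) ∣ U (j + 1) - u j :=
    Int.natCast_dvd.2 <| hLdef ▸ Finset.lcm_dvd fun t ht =>
      Int.natCast_dvd.1 (hgap t (Finset.mem_range.1 ht))
  have := Int.le_of_dvd (by linarith [hjump j (by omega)]) hLdvd
  linarith [hu (Nat.zero_le j), hU (show j + 1 ≤ ℓ + 1 by omega)]

namespace Multigraph

section

variable {V : Type} [Fintype V]

theorem sum_firing_eq_sum_firing_out (G : Multigraph V) (σ : V → ℤ) (p : V → Prop)
    [DecidablePred p] :
    ∑ v with p v, ∑ w, (G.mul v w : ℤ) * (σ w - σ v) =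
      ∑ v with p v, ∑ w with ¬ p w, (G.mul v w : ℤ) * (σ w - σ v) := by
  have hinner : ∑ v with p v, ∑ w with p w, (G.mul v w : ℤ) * (σ w - σ v) = 0 := by
    have hswap := Finset.sum_comm (s := Finset.univ.filter p) (t := Finset.univ.filter p)
      (f := fun v w => (G.mul v w : ℤ) * (σ w - σ v))
    have hneg : ∑ w with p w, ∑ v with p v, (G.mul v w : ℤ) * (σ w - σ v) =
        -∑ v with p v, ∑ w with p w, (G.mul v w : ℤ) * (σ w - σ v) := by
      simp only [← Finset.sum_neg_distrib, G.symm _ _]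
      exact Finset.sum_congr rfl fun _ _ => Finset.sum_congr rfl fun _ _ => by ring
    linarith
  simp only [← Finset.sum_filter_add_sum_filter_not Finset.univ p, Finset.sum_add_distrib,
    hinner, zero_add]

theorem LinEquiv.degree_eq {G : Multigraph V} {D D' : V → ℤ} (h : G.LinEquiv D D') :
    degree D' = degree D := by
  obtain ⟨σ, hσ⟩ := h
  have hcut := G.sum_firing_eq_sum_firing_out σ fun _ => True
  simp only [Finset.filter_true, not_true_eq_false, Finset.filter_false, Finset.sum_empty,
    Finset.sum_const_zero] at hcut
  simp only [degree, hσ, Finset.sum_add_distrib, hcut, add_zero]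

end

section

variable {n : ℕ} {b : ℕ → ℕ} {D E : Fin (n + 1) → ℤ}

def prefixSum (E : Fin (n + 1) → ℤ) (j : ℕ) : ℤ := ∑ v with v.val < j, E v

theorem prefixSum_zero (E : Fin (n + 1) → ℤ) : prefixSum E 0 = 0 := by
  simp [prefixSum]

theorem prefixSum_last (E : Fin (n + 1) → ℤ) : prefixSum E (n + 1) = degree E := by
  simp only [prefixSum, degree, Fin.is_lt, Finset.filter_true]

theorem prefixSum_succ (E : Fin (n + 1) → ℤ) (v : Fin (n + 1)) :
    prefixSum E (v + 1) = prefixSum E v + E v := by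
  have hsplit : ∀ w : Fin (n + 1), (if w.val < v + 1 then E w else 0) =
      (if w.val < v then E w else 0) + if w = v then E w else 0 := by
    intro w
    by_cases hw : w = v
    · subst hw; simp
    · have : w.val ≠ v.val := fun h => hw (Fin.ext h)
      split_ifs <;> omega
  simp only [prefixSum, Finset.sum_filter, hsplit, Finset.sum_add_distrib]
  rw [Finset.sum_eq_single v (fun w _ hw => if_neg hw) (fun h => absurd (Finset.mem_univ v) h),
    if_pos rfl]

theorem prefixSum_mono (hE : Effective E) : Monotone (prefixSum E) :=
  fun _ _ hij => Finset.sum_le_sum_of_subset_of_nonneg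
    (fun _ hv => by simp only [Finset.mem_filter] at hv ⊢; exact ⟨hv.1, by omega⟩)
    fun v _ _ => hE v

theorem sum_ite_interval_eq_prefixSum_sub (E : Fin (n + 1) → ℤ) (k ℓ : ℕ) :
    (∑ v : Fin (n + 1), if k ≤ v.val ∧ v.val ≤ k + ℓ then E v else 0) =
      prefixSum E (k + ℓ + 1) - prefixSum E k := by
  simp only [prefixSum, Finset.sum_filter, ← Finset.sum_sub_distrib]
  refine Finset.sum_congr rfl fun v _ => ?_
  split_ifs <;> omega

theorem bananaPath_sum_firing_prefix (σ : Fin (n + 1) → ℤ) (j : Fin n) :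
    ∑ v with v.val < j.val + 1, ∑ w, ((bananaPath n b).mul v w : ℤ) * (σ w - σ v) =
      b j * (σ j.succ - σ j.castSucc) := by
  rw [sum_firing_eq_sum_firing_out]
  have hmul : ∀ v w : Fin (n + 1), v.val < j.val + 1 → ¬ w.val < j.val + 1 →
      ((bananaPath n b).mul v w : ℤ) = if v = j.castSucc ∧ w = j.succ then (b j : ℤ) else 0 := by
    intro v w hv hw
    simp only [bananaPath, Fin.ext_iff, Fin.val_castSucc, Fin.val_succ]
    split_ifs <;> first | omega | simp_all
  rw [Finset.sum_eq_single j.castSucc]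
  · rw [Finset.sum_eq_single j.succ]
    · rw [hmul _ _ (by simp) (by simp)]; simp
    · intro w hw hne
      rw [Finset.mem_filter] at hw
      rw [hmul _ _ (by simp) hw.2, if_neg (by tauto), zero_mul]
    · intro h; exact absurd (by simp) h
  · intro v hv hne
    refine Finset.sum_eq_zero fun w hw => ?_
    rw [Finset.mem_filter] at hw
    rw [hmul _ _ (Finset.mem_filter.1 hv).2 hw.2, if_neg (by tauto), zero_mul]
  · intro h; exact absurd (by simp) h
theorem bananaPath_prefixSum_of_firing {σ : Fin (n + 1) → ℤ}
    (hσ : ∀ v, E v = D v + ∑ w, ((bananaPath n b).mul v w : ℤ) * (σ w - σ v)) (j : Fin n) :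
    prefixSum E (j + 1) = prefixSum D (j + 1) + b j * (σ j.succ - σ j.castSucc) := by
  simp only [prefixSum, hσ, Finset.sum_add_distrib, bananaPath_sum_firing_prefix]

/-- The sequences `prefixSum E` of the effective divisors `E` linearly equivalent to `D` on
`bananaPath n b` are exactly the sequences with these properties. -/
structure BananaAdmissible (b : ℕ → ℕ) (D : Fin (n + 1) → ℤ) (T : ℕ → ℤ) : Prop where
  zero : T 0 = 0
  last : T (n + 1) = degree D
  mono : Monotone T
  dvd : ∀ j < n, (b j : ℤ) ∣ T (j + 1) - prefixSum D (j + 1)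

theorem bananaAdmissible_prefixSum (hDE : (bananaPath n b).LinEquiv D E) (hE : Effective E) :
    BananaAdmissible b D (prefixSum E) where
  zero := prefixSum_zero E
  last := by rw [prefixSum_last, hDE.degree_eq]
  mono := prefixSum_mono hE
  dvd j hj := by
    obtain ⟨σ, hσ⟩ := hDE
    rw [bananaPath_prefixSum_of_firing hσ ⟨j, hj⟩, add_sub_cancel_left]
    exact dvd_mul_right _ _

namespace BananaAdmissible

variable {T T₁ T₂ : ℕ → ℤ}

theorem exists_divisor (hT : BananaAdmissible b D T) :
    ∃ E, (bananaPath n b).LinEquiv D E ∧ Effective E ∧ ∀ j ≤ n + 1, prefixSum E j = T j := by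
  set σ : Fin (n + 1) → ℤ :=
    fun v => ∑ i ∈ Finset.range v, (T (i + 1) - prefixSum D (i + 1)) / b i
  set E : Fin (n + 1) → ℤ :=
    fun v => D v + ∑ w, ((bananaPath n b).mul v w : ℤ) * (σ w - σ v)
  have hDE : (bananaPath n b).LinEquiv D E := ⟨σ, fun _ => rfl⟩
  have hET : ∀ j ≤ n + 1, prefixSum E j = T j := by
    rintro (_ | j) hj
    · rw [prefixSum_zero, hT.zero]
    obtain hjn | rfl := Nat.lt_or_eq_of_le (Nat.le_of_succ_le_succ hj)
    · have hstep : σ (Fin.succ ⟨j, hjn⟩) - σ (Fin.castSucc ⟨j, hjn⟩) =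
          (T (j + 1) - prefixSum D (j + 1)) / b j := by
        simp only [σ, Fin.val_succ, Fin.val_castSucc, Finset.sum_range_succ, add_sub_cancel_left]
      rw [bananaPath_prefixSum_of_firing (fun _ => rfl) ⟨j, hjn⟩, hstep,
        Int.mul_ediv_cancel' (hT.dvd j hjn), add_sub_cancel]
    · rw [prefixSum_last, hDE.degree_eq, hT.last]
  refine ⟨E, hDE, fun v => ?_, hET⟩
  have hv := prefixSum_succ E v
  rw [hET _ (by omega), hET _ (by omega)] at hv
  linarith [hT.mono (Nat.le_succ v)]

theorem dvd_sub (h₁ : BananaAdmissible b D T₁) (h₂ : BananaAdmissible b D T₂) {j : ℕ}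
    (hj : j < n) : (b j : ℤ) ∣ T₁ (j + 1) - T₂ (j + 1) := by
  simpa using _root_.dvd_sub (h₁.dvd j hj) (h₂.dvd j hj)

theorem of_forall_eq_or (h₁ : BananaAdmissible b D T₁) (h₂ : BananaAdmissible b D T₂)
    (hT : Monotone T) (hsel : ∀ j, T j = T₁ j ∨ T j = T₂ j) : BananaAdmissible b D T where
  zero := by rcases hsel 0 with h | h <;> rw [h] <;> [exact h₁.zero; exact h₂.zero]
  last := by rcases hsel (n + 1) with h | h <;> rw [h] <;> [exact h₁.last; exact h₂.last]
  mono := hT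
  dvd j hj := by
    rcases hsel (j + 1) with h | h <;> rw [h] <;> [exact h₁.dvd j hj; exact h₂.dvd j hj]

theorem finset_inf' {ι : Type} {s : Finset ι} (hs : s.Nonempty) {W : ι → ℕ → ℤ}
    (hW : ∀ i ∈ s, BananaAdmissible b D (W i)) : BananaAdmissible b D (s.inf' hs W) :=
  Finset.inf'_induction hs W (fun _ h₁ _ h₂ =>
    h₁.of_forall_eq_or h₂ (h₁.mono.inf h₂.mono) fun _ => min_choice _ _) hW

theorem finset_sup' {ι : Type} {s : Finset ι} (hs : s.Nonempty) {W : ι → ℕ → ℤ}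
    (hW : ∀ i ∈ s, BananaAdmissible b D (W i)) : BananaAdmissible b D (s.sup' hs W) :=
  Finset.sup'_induction hs W (fun _ h₁ _ h₂ =>
    h₁.of_forall_eq_or h₂ (h₁.mono.sup h₂.mono) fun _ => max_choice _ _) hW

theorem splice (h₁ : BananaAdmissible b D T₁) (h₂ : BananaAdmissible b D T₂) {k : ℕ}
    (hk : T₁ k ≤ T₂ (k + 1)) :
    BananaAdmissible b D fun j => if j ≤ k then T₁ j else T₂ j := by
  refine h₁.of_forall_eq_or h₂ (monotone_nat_of_le_succ fun j => ?_) fun j => ?_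
  · rcases lt_trichotomy j k with hjk | rfl | hjk
    · simp only [if_pos hjk.le, if_pos (Nat.succ_le_of_lt hjk)]; exact h₁.mono j.le_succ
    · simpa using hk
    · simp only [if_neg hjk.not_ge, if_neg (by omega : ¬ j + 1 ≤ k)]; exact h₂.mono j.le_succ
  · by_cases hj : j ≤ k <;> simp [hj]

end BananaAdmissible

end

end Multigraph
open Multigraph in
theorem lcm_string_general
    (n : ℕ) (b : ℕ → ℕ)
    (s : ℕ) (a : ℕ → ℕ)
    (k ℓ : ℕ) (hkl : k + ℓ ≤ n)
    (hpat : ∀ i < ℓ, b (k + i) = a (i % s))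
    (L : ℕ) (hL : L = (Finset.range s).lcm a)
    (hlen : s * L ^ 2 ≤ ℓ + 1)
    (D : Fin (n + 1) → ℤ) (hD : (bananaPath n b).PosRank D) :
    ∃ D' : Fin (n + 1) → ℤ, (bananaPath n b).LinEquiv D D' ∧ Effective D' ∧
      (L : ℤ) ≤ ∑ v : Fin (n + 1), if k ≤ v.val ∧ v.val ≤ k + ℓ then D' v else 0 := by
  subst hL
  have hwit : ∀ m : Fin (n + 1), ∃ T, BananaAdmissible b D T ∧ T m < T (m + 1) := by
    intro m
    obtain ⟨E, hDE, hE, hEm⟩ := hD m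
    exact ⟨prefixSum E, bananaAdmissible_prefixSum hDE hE, by rw [prefixSum_succ]; omega⟩
  choose W hW hWm using hwit
  have hu := BananaAdmissible.finset_inf' Finset.univ_nonempty fun m _ => hW m
  have hU := BananaAdmissible.finset_sup' Finset.univ_nonempty fun m _ => hW m
  set u := Finset.univ.inf' Finset.univ_nonempty W
  set U := Finset.univ.sup' Finset.univ_nonempty W
  have hjump : ∀ m ≤ n, u m < U (m + 1) := fun m hm =>
    calc u m ≤ W ⟨m, by omega⟩ m := Finset.inf'_le W (Finset.mem_univ _) m
      _ < W ⟨m, by omega⟩ (m + 1) := hWm _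
      _ ≤ U (m + 1) := Finset.le_sup' W (Finset.mem_univ _) (m + 1)
  obtain ⟨E, hDE, hE, hET⟩ := (hu.splice hU (hjump k (by omega)).le).exists_divisor
  refine ⟨E, hDE, hE, ?_⟩
  rw [sum_ite_interval_eq_prefixSum_sub, hET _ (by omega), hET _ (by omega),
    if_neg (by omega), if_pos le_rfl]
  exact lcm_le_sub_of_interlacing (u := fun i => u (k + i)) (U := fun i => U (k + i))
    (fun i j hij => hu.mono (by omega)) (fun i j hij => hU.mono (by omega))
    (fun i hi => hjump (k + i) (by omega))
    (fun i hi => hpat i hi ▸ hU.dvd_sub hu (by omega)) hlen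

open Multigraph in
/-- If a banana path contains a string of consecutive vertices
`v_k, …, v_{k+ℓ}` whose edge bunch sizes follow the repeating pattern `a_1, …, a_s`,
`L = lcm(a_1, …, a_s)` and `ℓ + 1 ≥ s·L²`, then every positive-rank divisor is linearly
equivalent to an effective divisor placing at least `L` chips on `v_k, …, v_{k+ℓ}`. -/
theorem lcm_string
    (n : ℕ) (b : ℕ → ℕ) (hb : ∀ i < n, 0 < b i)
    (s : ℕ) (hs : 0 < s) (a : ℕ → ℕ) (ha : ∀ i < s, 0 < a i)
    (k ℓ : ℕ) (hkl : k + ℓ ≤ n)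
    (hpat : ∀ i < ℓ, b (k + i) = a (i % s))
    (L : ℕ) (hL : L = (Finset.range s).lcm a)
    (hlen : s * L ^ 2 ≤ ℓ + 1)
    (D : Fin (n + 1) → ℤ) (hD : (bananaPath n b).PosRank D) :
    ∃ D' : Fin (n + 1) → ℤ, (bananaPath n b).LinEquiv D D' ∧ Effective D' ∧
      (L : ℤ) ≤ ∑ v : Fin (n + 1), if k ≤ v.val ∧ v.val ≤ k + ℓ then D' v else 0 :=
  lcm_string_general n b s a k ℓ hkl hpat L hL hlen D hD
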